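/- arXiv:1704.00807 — 2 statements merged into one kernel-verified Lean document; each statement's English description precedes it below -/
import Mathlib

section
/- If S is an ε-synchronization string, then for any indices i < j, the prefixes S[1,i] and S[1,j] satisfy RSD(S[1,i], S[1,j]) > 1 − ε. -/
open scoped Classical

variable {α : Type*}

def EditStep (x y : List α) : Prop :=
  (∃ (a : α) (l r : List α), x = l ++ r ∧ y = l ++ a :: r) ∨
  (∃ (a : α) (l r : List α), x = l ++ a :: r ∧ y = l ++ r)

def EditChain : ℕ → List α → List α → Prop
  | 0, x, y => x = y
  | n+1, x, y => ∃ z, EditStep x z ∧ EditChain n z y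

/-- Edit distance: minimum number of single-symbol insertions and deletions
transforming `x` into `y`. -/
noncomputable def ED (x y : List α) : ℕ := sInf {n | EditChain n x y}

/-- Length of a longest common subsequence. -/
noncomputable def LCS (x y : List α) : ℕ :=
  sSup {n | ∃ z : List α, z.length = n ∧ z.Sublist x ∧ z.Sublist y}

/-- The length-`k` suffix of `S`, padded on the left with `none` (the symbol `⊥ ∉ Σ`)
if `k > |S|`. -/
def padSuffix (S : List α) (k : ℕ) : List (Option α) :=
  List.replicate (k - S.length) none ++ (S.map some).drop (S.length - k)

/-- Relative suffix distance. -/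
noncomputable def RSD (S S' : List α) : ℝ :=
  ⨆ k : ℕ+, (ED (padSuffix S k) (padSuffix S' k) : ℝ) / (2 * ((k : ℕ) : ℝ))

/-- The factor `S[i, j)` of `S` (1-based indices). -/
def factor (S : List α) (i j : ℕ) : List α := (S.drop (i - 1)).take (j - i)

/-- `S` is an ε-synchronization string. -/
def IsSyncString (ε : ℝ) (S : List α) : Prop :=
  ∀ i j k : ℕ, 1 ≤ i → i < j → j < k → k ≤ S.length + 1 →
    (1 - ε) * ((k : ℝ) - (i : ℝ)) < (ED (factor S i j) (factor S j k) : ℝ)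

/-- Monotone matching between `S` and `S'` (1-based indices). -/
def IsMatching (S S' : List α) (M : List (ℕ × ℕ)) : Prop :=
  M.Chain' (fun p q => p.1 < q.1 ∧ p.2 < q.2) ∧
  ∀ p ∈ M, 1 ≤ p.1 ∧ p.1 ≤ S.length ∧ 1 ≤ p.2 ∧ p.2 ≤ S'.length ∧
    S[p.1 - 1]? = S'[p.2 - 1]?

/-- `T` satisfies the ε-self-matching property. -/
def HasSelfMatchingProp (ε : ℝ) (T : List α) : Prop :=
  ∀ M : List (ℕ × ℕ), IsMatching T T M →
    ((M.filter (fun p => p.1 ≠ p.2)).length : ℝ) < ε * (T.length : ℝ)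

/-- Index `k` of `S` is ε-bad (1-based). -/
def BadIndex (ε : ℝ) (S : List α) (k : ℕ) : Prop :=
  ∃ i j, 1 ≤ i ∧ i ≤ k ∧ k ≤ j ∧ j ≤ S.length ∧
    ¬ HasSelfMatchingProp ε (factor S i (j + 1))

/-- Number of ε-bad indices of `S`. -/
noncomputable def badCount (ε : ℝ) (S : List α) : ℕ :=
  ((Finset.Icc 1 S.length).filter fun k => BadIndex ε S k).card

/-!
Take k = j - i. The length-k suffix of `S[1,j]` is the factor `S[i+1, j+1)`, and the length-k
suffix of `S[1,i]` is the factor `S[i-k+1, i+1)` preceded by p = max(k - i, 0) copies of `⊥`.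
Since `ED x y = |x| + |y| - 2 LCS x y` and `⊥` never occurs in `S`, the padding adds exactly p to
the edit distance, while the synchronization property bounds the edit distance of the two
adjacent factors from below by `(1 - ε)(2k - p)`. Hence the length-k term of the RSD exceeds
`(1 - ε) + ε p / (2k) ≥ 1 - ε`, where `ε > 0` because `S` has two adjacent factors of length one.
-/

open scoped List

section EditDistance

variable {m n : ℕ} {x y z : List α}

theorem EditStep.symm (h : EditStep x y) : EditStep y x := by
  rcases h with ⟨a, l, r, rfl, rfl⟩ | ⟨a, l, r, rfl, rfl⟩
  · exact Or.inr ⟨a, l, r, rfl, rfl⟩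
  · exact Or.inl ⟨a, l, r, rfl, rfl⟩

theorem EditStep.cons (a : α) (h : EditStep x y) : EditStep (a :: x) (a :: y) := by
  rcases h with ⟨b, l, r, rfl, rfl⟩ | ⟨b, l, r, rfl, rfl⟩
  · exact Or.inl ⟨b, a :: l, r, rfl, rfl⟩
  · exact Or.inr ⟨b, a :: l, r, rfl, rfl⟩

theorem EditChain.trans (h₁ : EditChain m x y) (h₂ : EditChain n y z) :
    EditChain (m + n) x z := by
  induction m generalizing x with
  | zero => rw [Nat.zero_add]; exact h₁ ▸ h₂
  | succ m ih =>
    obtain ⟨w, hxw, hwy⟩ := h₁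
    rw [Nat.succ_add]
    exact ⟨w, hxw, ih hwy⟩

theorem EditChain.single (h : EditStep x y) : EditChain 1 x y := ⟨y, h, rfl⟩

theorem EditChain.symm (h : EditChain n x y) : EditChain n y x := by
  induction n generalizing x with
  | zero => exact (h : x = y).symm
  | succ n ih =>
    obtain ⟨w, hxw, hwy⟩ := h
    exact (ih hwy).trans (EditChain.single hxw.symm)

theorem EditChain.cons (a : α) (h : EditChain n x y) : EditChain n (a :: x) (a :: y) := by
  induction n generalizing x with
  | zero => exact congrArg (a :: ·) h
  | succ n ih =>
    obtain ⟨w, hxw, hwy⟩ := h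
    exact ⟨a :: w, hxw.cons a, ih hwy⟩

theorem List.Sublist.editChain (h : z <+ x) : EditChain (x.length - z.length) x z := by
  induction h with
  | slnil => rfl
  | @cons l₁ l₂ a h ih =>
    rw [List.length_cons, show l₂.length + 1 - l₁.length = 1 + (l₂.length - l₁.length) by
      have := h.length_le; omega]
    exact (EditChain.single (Or.inr ⟨a, [], l₂, rfl, rfl⟩)).trans ih
  | @cons_cons l₁ l₂ a _ ih => simpa using ih.cons a

theorem ED_le (h : EditChain n x y) : ED x y ≤ n := Nat.sInf_le h

theorem editChain_ED (x y : List α) : EditChain (ED x y) x y :=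
  Nat.sInf_mem (s := {n | EditChain n x y}) ⟨_, (List.nil_sublist x).editChain.trans (List.nil_sublist y).editChain.symm⟩

theorem LCS_bddAbove (x y : List α) :
    BddAbove {n | ∃ z : List α, z.length = n ∧ z.Sublist x ∧ z.Sublist y} :=
  ⟨x.length, by rintro n ⟨z, rfl, hx, -⟩; exact hx.length_le⟩

theorem exists_sublist_length_eq_LCS (x y : List α) :
    ∃ z : List α, z.length = LCS x y ∧ z <+ x ∧ z <+ y :=
  Nat.sSup_mem (s := {n | ∃ z : List α, z.length = n ∧ z.Sublist x ∧ z.Sublist y}) ⟨0, [], rfl, List.nil_sublist x, List.nil_sublist y⟩ (LCS_bddAbove x y)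

theorem length_le_LCS (hx : z <+ x) (hy : z <+ y) : z.length ≤ LCS x y :=
  le_csSup (LCS_bddAbove x y) ⟨z, rfl, hx, hy⟩

theorem LCS_mono_left {x' : List α} (h : x <+ x') : LCS x y ≤ LCS x' y := by
  obtain ⟨z, hz, hx, hy⟩ := exists_sublist_length_eq_LCS x y
  exact hz ▸ length_le_LCS (hx.trans h) hy

theorem LCS_append_cons_le (l r y : List α) (a : α) :
    LCS (l ++ a :: r) y ≤ LCS (l ++ r) y + 1 := by
  obtain ⟨w, hw, hwx, hwy⟩ := exists_sublist_length_eq_LCS (l ++ a :: r) y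
  obtain ⟨w₁, w₂, rfl, h₁, h₂⟩ := List.sublist_append_iff.mp hwx
  rcases List.sublist_cons_iff.mp h₂ with h₂ | ⟨t, rfl, ht⟩
  · have := length_le_LCS (h₁.append h₂) hwy
    omega
  · have := length_le_LCS (h₁.append ht)
      (((List.sublist_cons_self a t).append_left w₁).trans hwy)
    simp only [List.length_append, List.length_cons] at hw this
    omega

theorem EditChain.length_add_length_le (h : EditChain n x y) :
    x.length + y.length ≤ n + 2 * LCS x y := by
  induction n generalizing x with
  | zero =>
    obtain rfl : x = y := h
    have := length_le_LCS (List.Sublist.refl x) (List.Sublist.refl x)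
    omega
  | succ n ih =>
    obtain ⟨z, hxz, hzy⟩ := h
    have := ih hzy
    rcases hxz with ⟨a, l, r, rfl, rfl⟩ | ⟨a, l, r, rfl, rfl⟩
    · have := LCS_append_cons_le l r y a
      simp only [List.length_append, List.length_cons] at *
      omega
    · have := LCS_mono_left (y := y) ((List.sublist_cons_self a r).append_left l)
      simp only [List.length_append, List.length_cons] at *
      omega

theorem ED_add_two_mul_LCS (x y : List α) : ED x y + 2 * LCS x y = x.length + y.length := by
  obtain ⟨z, hz, hx, hy⟩ := exists_sublist_length_eq_LCS x y
  have := ED_le (hx.editChain.trans hy.editChain.symm)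
  have := (editChain_ED x y).length_add_length_le
  have := hx.length_le
  have := hy.length_le
  omega

theorem ED_le_length_add_length (x y : List α) : ED x y ≤ x.length + y.length := by
  have := ED_add_two_mul_LCS x y
  omega

theorem LCS_map_of_injective {β : Type*} {f : α → β} (hf : Function.Injective f) (x y : List α) :
    LCS (x.map f) (y.map f) = LCS x y := by
  refine le_antisymm ?_ ?_
  · obtain ⟨z, hz, hx, hy⟩ := exists_sublist_length_eq_LCS (x.map f) (y.map f)
    obtain ⟨w, hw, rfl⟩ := List.sublist_map_iff.mp hx
    obtain ⟨w', hw', hww'⟩ := List.sublist_map_iff.mp hy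
    obtain rfl := List.map_injective_iff.mpr hf hww'
    simpa [← hz] using length_le_LCS hw hw'
  · obtain ⟨z, hz, hx, hy⟩ := exists_sublist_length_eq_LCS x y
    simpa [← hz] using length_le_LCS (hx.map f) (hy.map f)

theorem LCS_append_of_disjoint {u : List α} (hu : ∀ a ∈ u, a ∉ y) (x : List α) :
    LCS (u ++ x) y = LCS x y := by
  refine le_antisymm ?_ (LCS_mono_left (List.sublist_append_right u x))
  obtain ⟨z, hz, hux, hy⟩ := exists_sublist_length_eq_LCS (u ++ x) y
  have hx : z <+ x :=
    hux.of_sublist_append_right fun a hz hu' => hu a hu' (hy.subset hz)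
  exact hz ▸ length_le_LCS hx hy

theorem ED_map_of_injective {β : Type*} {f : α → β} (hf : Function.Injective f) (x y : List α) :
    ED (x.map f) (y.map f) = ED x y := by
  have := ED_add_two_mul_LCS (x.map f) (y.map f)
  have := ED_add_two_mul_LCS x y
  rw [LCS_map_of_injective hf] at *
  simp only [List.length_map] at *
  omega

theorem ED_append_of_disjoint {u : List α} (hu : ∀ a ∈ u, a ∉ y) (x : List α) :
    ED (u ++ x) y = u.length + ED x y := by
  have := ED_add_two_mul_LCS (u ++ x) y
  have := ED_add_two_mul_LCS x y
  rw [LCS_append_of_disjoint hu] at *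
  simp only [List.length_append] at *
  omega

end EditDistance

section RelativeSuffixDistance

theorem padSuffix_length (S : List α) (k : ℕ) : (padSuffix S k).length = k := by
  simp only [padSuffix, List.length_append, List.length_replicate, List.length_drop,
    List.length_map]
  omega

theorem le_RSD (S S' : List α) (k : ℕ+) :
    (ED (padSuffix S k) (padSuffix S' k) : ℝ) / (2 * ((k : ℕ) : ℝ)) ≤ RSD S S' := by
  refine le_ciSup (f := fun k : ℕ+ =>
    (ED (padSuffix S k) (padSuffix S' k) : ℝ) / (2 * ((k : ℕ) : ℝ))) ⟨1, ?_⟩ k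
  rintro _ ⟨k, rfl⟩
  have hk : (0 : ℝ) < 2 * ((k : ℕ) : ℝ) := by positivity
  have hED : (ED (padSuffix S k) (padSuffix S' k) : ℝ) ≤ 2 * ((k : ℕ) : ℝ) := by
    have := ED_le_length_add_length (padSuffix S k) (padSuffix S' k)
    rw [padSuffix_length, padSuffix_length] at this
    push_cast [two_mul]
    exact_mod_cast this
  exact (div_le_one hk).mpr hED

-- Truncated subtraction covers both cases: no padding when `k ≤ i`, else the factor is `S[1, i+1)`.
theorem padSuffix_take {S : List α} {i : ℕ} (hi : i ≤ S.length) (k : ℕ) :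
    padSuffix (S.take i) k =
      List.replicate (k - i) none ++ (factor S (i - k + 1) (i + 1)).map some := by
  have hlen : (S.take i).length = i := List.length_take_of_le hi
  rw [padSuffix, hlen, ← List.map_drop, List.drop_take, factor,
    show i - k + 1 - 1 = i - k by omega, show i + 1 - (i - k + 1) = i - (i - k) by omega]

end RelativeSuffixDistance

section Synchronization

variable {ε : ℝ} {S : List α}

theorem IsSyncString.pos (h : IsSyncString ε S) (hS : 2 ≤ S.length) : 0 < ε := by
  have hsync := h 1 2 3 le_rfl (by norm_num) (by norm_num) (by omega)
  have hED : ED (factor S 1 2) (factor S 2 3) ≤ 2 := by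
    have := ED_le_length_add_length (factor S 1 2) (factor S 2 3)
    have : (factor S 1 2).length ≤ 1 := by simp [factor]
    have : (factor S 2 3).length ≤ 1 := by simp [factor]
    omega
  have : (ED (factor S 1 2) (factor S 2 3) : ℝ) ≤ 2 := by exact_mod_cast hED
  norm_num at hsync
  linarith

theorem IsSyncString.lt_ED_padSuffix_take (h : IsSyncString ε S) {i j : ℕ} (hi : 1 ≤ i)
    (hij : i < j) (hj : j ≤ S.length) :
    (1 - ε) * (2 * ((j - i : ℕ) : ℝ)) <
      ED (padSuffix (S.take i) (j - i)) (padSuffix (S.take j) (j - i)) := by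
  set k := j - i
  set p := k - i
  have hε := h.pos (by omega)
  have hED : ED (padSuffix (S.take i) k) (padSuffix (S.take j) k) =
      p + ED (factor S (i - k + 1) (i + 1)) (factor S (i + 1) (j + 1)) := by
    rw [padSuffix_take (by omega), padSuffix_take hj, show k - j = 0 by omega,
      show j - k + 1 = i + 1 by omega, List.replicate_zero, List.nil_append,
      ED_append_of_disjoint (by simp), ED_map_of_injective (Option.some_injective α),
      List.length_replicate]
  have hsync := h (i - k + 1) (i + 1) (j + 1) (by omega) (by omega) (by omega) (by omega)
  have hwidth : (((j + 1 : ℕ) : ℝ) - ((i - k + 1 : ℕ) : ℝ)) = 2 * (k : ℝ) - p := by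
    have : ((j + 1 + p : ℕ) : ℝ) = ((i - k + 1 + 2 * k : ℕ) : ℝ) := by congr 1; omega
    push_cast at this ⊢
    linarith
  rw [hED]
  rw [hwidth] at hsync
  push_cast
  linarith [mul_nonneg hε.le (Nat.cast_nonneg (α := ℝ) p)]

end Synchronization

theorem sync_prefixes_rsd (ε : ℝ) (S : List α) (h : IsSyncString ε S) :
    ∀ i j : ℕ, 1 ≤ i → i < j → j ≤ S.length →
      1 - ε < RSD (S.take i) (S.take j) := by
  intro i j hi hij hj
  have hk : (0 : ℝ) < 2 * ((j - i : ℕ) : ℝ) := by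
    have : 0 < j - i := by omega
    positivity
  calc 1 - ε
      < ED (padSuffix (S.take i) (j - i)) (padSuffix (S.take j) (j - i)) /
          (2 * ((j - i : ℕ) : ℝ)) :=
        (lt_div_iff₀ hk).mpr (h.lt_ED_padSuffix_take hi hij hj)
    _ ≤ RSD (S.take i) (S.take j) := le_RSD _ _ ⟨j - i, by omega⟩
end

section
/- Let S be a string of length n satisfying the ε-self-matching property. Then for any ε' with 3ε < ε' < 1, the number of ε'-bad indices of S is at most 3nε/ε'. -/
open scoped Classical

variable {α : Type*}

/-! Every bad index lies in an interval `[i, j]` whose factor violates the ε'-self-matching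
property. A Vitali-type greedy selection (repeatedly keep a longest interval and discard those
meeting it, which lie in its threefold enlargement) yields pairwise disjoint violating intervals
of total length at least a third of the number of bad indices. Their bad matchings, shifted into
`S` and concatenated from left to right, form one matching of `S` with at least ε' times that
total length of bad pairs, while the ε-self-matching property of `S` bounds it by ε|S|. -/

open Finset

lemma mem_Icc_enlarge_of_not_disjoint {a b c d k : ℕ} (hk : k ∈ Icc c d)
    (hmeet : ¬ Disjoint (Icc a b) (Icc c d)) (hcard : #(Icc c d) ≤ #(Icc a b)) :
    k ∈ Icc (2 * a - b) (2 * b - a) := by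
  obtain ⟨x, hxab, hxcd⟩ := not_disjoint_iff.1 hmeet
  simp only [mem_Icc, Nat.card_Icc] at *
  omega

lemma card_Icc_enlarge_le (a b : ℕ) : #(Icc (2 * a - b) (2 * b - a)) ≤ 3 * #(Icc a b) := by
  simp only [Nat.card_Icc]
  omega

theorem exists_pairwiseDisjoint_subfamily_card_le (F : Finset (ℕ × ℕ)) (B : Finset ℕ)
    (hB : ∀ k ∈ B, ∃ p ∈ F, k ∈ Icc p.1 p.2) :
    ∃ G ⊆ F, (G : Set (ℕ × ℕ)).PairwiseDisjoint (fun p => Icc p.1 p.2) ∧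
      #B ≤ 3 * ∑ p ∈ G, #(Icc p.1 p.2) := by
  induction F using Finset.strongInduction generalizing B with
  | H F ih =>
  rcases B.eq_empty_or_nonempty with rfl | ⟨k₀, hk₀⟩
  · exact ⟨∅, empty_subset _, by simp, by simp⟩
  obtain ⟨p₀, hp₀F, hk₀p₀⟩ := hB k₀ hk₀
  -- Keep a longest interval `P`; every interval meeting it lies in the enlargement `E`.
  obtain ⟨P, hPF, hPmax⟩ := F.exists_max_image (fun p => #(Icc p.1 p.2)) ⟨p₀, hp₀F⟩
  have hPne : (Icc P.1 P.2).Nonempty :=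
    card_pos.1 ((card_pos.2 ⟨k₀, hk₀p₀⟩).trans_le (hPmax p₀ hp₀F))
  set F' := F.filter fun q => Disjoint (Icc P.1 P.2) (Icc q.1 q.2)
  set E := Icc (2 * P.1 - P.2) (2 * P.2 - P.1)
  have hPF' : P ∉ F' := fun h => hPne.ne_empty (disjoint_self.1 (mem_filter.1 h).2)
  have hF'F : F' ⊂ F := ssubset_of_subset_of_ne (filter_subset _ _) fun h => hPF' (h ▸ hPF)
  obtain ⟨G', hG'F', hG'disj, hG'card⟩ := ih F' hF'F (B \ E) fun k hk => by
    obtain ⟨hkB, hkE⟩ := mem_sdiff.1 hk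
    obtain ⟨q, hqF, hkq⟩ := hB k hkB
    refine ⟨q, mem_filter.2 ⟨hqF, ?_⟩, hkq⟩
    by_contra hmeet
    exact hkE (mem_Icc_enlarge_of_not_disjoint hkq hmeet (hPmax q hqF))
  have hPG' : P ∉ G' := fun h => hPF' (hG'F' h)
  refine ⟨insert P G', insert_subset hPF (hG'F'.trans (filter_subset _ _)), ?_, ?_⟩
  · rw [coe_insert]
    exact hG'disj.insert fun q hq _ => (mem_filter.1 (hG'F' hq)).2
  · rw [sum_insert hPG']
    calc #B ≤ #(B \ E) + #E := card_le_card_sdiff_add_card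
      _ ≤ 3 * ∑ p ∈ G', #(Icc p.1 p.2) + 3 * #(Icc P.1 P.2) :=
        add_le_add hG'card (card_Icc_enlarge_le _ _)
      _ = 3 * (#(Icc P.1 P.2) + ∑ p ∈ G', #(Icc p.1 p.2)) := by ring

def badPairCount (M : List (ℕ × ℕ)) : ℕ := (M.filter fun m => m.1 ≠ m.2).length

lemma badPairCount_append (M₁ M₂ : List (ℕ × ℕ)) :
    badPairCount (M₁ ++ M₂) = badPairCount M₁ + badPairCount M₂ := by
  simp [badPairCount]

lemma badPairCount_map_add (M : List (ℕ × ℕ)) (c : ℕ) :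
    badPairCount (M.map fun m => (m.1 + c, m.2 + c)) = badPairCount M := by
  simp [badPairCount, List.filter_map, Function.comp_def]

lemma exists_matching_of_not_hasSelfMatchingProp {ε : ℝ} {T : List α}
    (h : ¬ HasSelfMatchingProp ε T) :
    ∃ M, IsMatching T T M ∧ ε * T.length ≤ badPairCount M := by
  simpa [HasSelfMatchingProp, badPairCount] using h

lemma IsMatching.append {S S' : List α} {M₁ M₂ : List (ℕ × ℕ)}
    (h₁ : IsMatching S S' M₁) (h₂ : IsMatching S S' M₂)
    (h : ∀ a ∈ M₁, ∀ b ∈ M₂, a.1 < b.1 ∧ a.2 < b.2) : IsMatching S S' (M₁ ++ M₂) :=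
  ⟨List.isChain_append.2 ⟨h₁.1, h₂.1, fun a ha b hb =>
      h a (List.mem_of_mem_getLast? ha) b (List.mem_of_mem_head? hb)⟩,
    fun m hm => (List.mem_append.1 hm).elim (h₁.2 m) (h₂.2 m)⟩

lemma length_factor {S : List α} {i j : ℕ} (hi : 1 ≤ i) (hj : j ≤ S.length) :
    (factor S i (j + 1)).length = j + 1 - i := by
  simp only [factor, List.length_take, List.length_drop]
  omega

lemma getElem?_factor (S : List α) {i j k : ℕ} (hk : k < j + 1 - i) :
    (factor S i (j + 1))[k]? = S[i - 1 + k]? := by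
  rw [factor, List.getElem?_take_of_lt hk, List.getElem?_drop]

lemma IsMatching.map_add_of_factor {S : List α} {i j : ℕ} (hi : 1 ≤ i) (hj : j ≤ S.length)
    {M : List (ℕ × ℕ)} (hM : IsMatching (factor S i (j + 1)) (factor S i (j + 1)) M) :
    IsMatching S S (M.map fun m => (m.1 + (i - 1), m.2 + (i - 1))) ∧
      ∀ m ∈ M.map fun m => (m.1 + (i - 1), m.2 + (i - 1)), m.1 ∈ Icc i j ∧ m.2 ∈ Icc i j := by
  rw [IsMatching, length_factor hi hj] at hM
  obtain ⟨hchain, hM⟩ := hM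
  refine ⟨⟨(List.isChain_map _).2 (hchain.imp fun _ _ h => ⟨by omega, by omega⟩), ?_⟩, ?_⟩
  · simp only [List.mem_map, forall_exists_index, and_imp]
    rintro _ m hm rfl
    obtain ⟨h₁, h₂, h₃, h₄, heq⟩ := hM m hm
    rw [getElem?_factor S (by omega), getElem?_factor S (by omega)] at heq
    refine ⟨by omega, by omega, by omega, by omega, ?_⟩
    rwa [show m.1 + (i - 1) - 1 = i - 1 + (m.1 - 1) by omega,
      show m.2 + (i - 1) - 1 = i - 1 + (m.2 - 1) by omega]
  · simp only [List.mem_map, forall_exists_index, and_imp, mem_Icc]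
    rintro _ m hm rfl
    obtain ⟨h₁, h₂, h₃, h₄, -⟩ := hM m hm
    omega

def IsViolatingInterval (ε : ℝ) (S : List α) (p : ℕ × ℕ) : Prop :=
  1 ≤ p.1 ∧ p.1 ≤ p.2 ∧ p.2 ≤ S.length ∧ ¬ HasSelfMatchingProp ε (factor S p.1 (p.2 + 1))

lemma BadIndex.exists_isViolatingInterval {ε : ℝ} {S : List α} {k : ℕ} (hk : BadIndex ε S k) :
    ∃ p, IsViolatingInterval ε S p ∧ k ∈ Icc p.1 p.2 := by
  obtain ⟨i, j, hi, hik, hkj, hj, hv⟩ := hk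
  exact ⟨(i, j), ⟨hi, hik.trans hkj, hj, hv⟩, mem_Icc.2 ⟨hik, hkj⟩⟩

lemma IsViolatingInterval.exists_matching {ε : ℝ} {S : List α} {p : ℕ × ℕ}
    (hp : IsViolatingInterval ε S p) :
    ∃ M, IsMatching S S M ∧ (∀ m ∈ M, m.1 ∈ Icc p.1 p.2 ∧ m.2 ∈ Icc p.1 p.2) ∧
      ε * #(Icc p.1 p.2) ≤ badPairCount M := by
  obtain ⟨h₁, h₁₂, h₂, hv⟩ := hp
  obtain ⟨M, hM, hcount⟩ := exists_matching_of_not_hasSelfMatchingProp hv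
  obtain ⟨hM', hloc⟩ := hM.map_add_of_factor h₁ h₂
  refine ⟨_, hM', hloc, ?_⟩
  rwa [badPairCount_map_add, Nat.card_Icc, ← length_factor h₁ h₂]

lemma exists_matching_of_pairwiseDisjoint {ε : ℝ} {S : List α} (G : Finset (ℕ × ℕ))
    (hG : ∀ p ∈ G, IsViolatingInterval ε S p)
    (hdisj : (G : Set (ℕ × ℕ)).PairwiseDisjoint fun p => Icc p.1 p.2) :
    ∃ M, IsMatching S S M ∧ (∀ m ∈ M, ∃ p ∈ G, m.1 ∈ Icc p.1 p.2 ∧ m.2 ∈ Icc p.1 p.2) ∧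
      ε * ∑ p ∈ G, #(Icc p.1 p.2) ≤ badPairCount M := by
  induction G using Finset.induction_on_max_value (fun p : ℕ × ℕ => p.1) with
  | empty => exact ⟨[], ⟨List.isChain_nil, by simp⟩, by simp, by simp [badPairCount]⟩
  | insert a s has hmax ih =>
  rw [coe_insert] at hdisj
  obtain ⟨M, hM, hloc, hcount⟩ :=
    ih (fun p hp => hG p (mem_insert_of_mem hp)) (hdisj.subset (Set.subset_insert _ _))
  obtain ⟨Ma, hMa, hloca, hcounta⟩ := (hG a (mem_insert_self a s)).exists_matching
  -- `a` has the largest left endpoint and is disjoint from the others, so lies to their right.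
  have hleft : ∀ x ∈ s, x.2 < a.1 := fun x hx => by
    have hd := hdisj (Set.mem_insert_of_mem _ hx) (Set.mem_insert a _)
      fun h => has (h ▸ hx)
    have ha := (hG a (mem_insert_self a s)).2.1
    by_contra! h
    exact disjoint_left.1 hd (mem_Icc.2 ⟨hmax x hx, h⟩) (mem_Icc.2 ⟨le_rfl, ha⟩)
  refine ⟨M ++ Ma, hM.append hMa fun m hm m' hm' => ?_, fun m hm => ?_, ?_⟩
  · obtain ⟨x, hx, hm₁, hm₂⟩ := hloc m hm
    obtain ⟨hm'₁, hm'₂⟩ := hloca m' hm'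
    have := hleft x hx
    simp only [mem_Icc] at *
    omega
  · rcases List.mem_append.1 hm with hm | hm
    · obtain ⟨x, hx, hx'⟩ := hloc m hm
      exact ⟨x, mem_insert_of_mem hx, hx'⟩
    · exact ⟨a, mem_insert_self a s, hloca m hm⟩
  · rw [sum_insert has, badPairCount_append]
    push_cast at hcount hcounta ⊢
    linarith

theorem bad_index_count_bound_general (ε ε' : ℝ) (S : List α)
    (h : HasSelfMatchingProp ε S) (h1 : 3 * ε < ε') :
    (badCount ε' S : ℝ) ≤ 3 * (S.length : ℝ) * ε / ε' := by
  have hεS : 0 < ε * S.length := by simpa using h [] ⟨List.isChain_nil, by simp⟩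
  have hε' : 0 < ε' := by linarith [pos_of_mul_pos_left hεS (Nat.cast_nonneg _)]
  set F := (Icc 1 S.length ×ˢ Icc 1 S.length).filter (IsViolatingInterval ε' S)
  have hcover : ∀ k ∈ (Icc 1 S.length).filter (BadIndex ε' S), ∃ p ∈ F, k ∈ Icc p.1 p.2 := by
    intro k hk
    obtain ⟨p, hp, hkp⟩ := (mem_filter.1 hk).2.exists_isViolatingInterval
    have ⟨h₁, h₁₂, h₂, _⟩ := hp
    refine ⟨p, mem_filter.2 ⟨mem_product.2 ⟨?_, ?_⟩, hp⟩, hkp⟩ <;> simp only [mem_Icc] <;> omega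
  obtain ⟨G, hGF, hdisj, hcard⟩ := exists_pairwiseDisjoint_subfamily_card_le F _ hcover
  obtain ⟨M, hM, -, hcount⟩ :=
    exists_matching_of_pairwiseDisjoint G (fun p hp => (mem_filter.1 (hGF hp)).2) hdisj
  have hbad : (badCount ε' S : ℝ) ≤ 3 * ∑ p ∈ G, #(Icc p.1 p.2) := by exact_mod_cast hcard
  have hMS : (badPairCount M : ℝ) < ε * S.length := h M hM
  rw [le_div_iff₀ hε']
  calc (badCount ε' S : ℝ) * ε' ≤ 3 * (ε' * ∑ p ∈ G, #(Icc p.1 p.2)) := by nlinarith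
    _ ≤ 3 * S.length * ε := by linarith

theorem bad_index_count_bound (ε ε' : ℝ) (S : List α)
    (h : HasSelfMatchingProp ε S) (h1 : 3 * ε < ε') (h2 : ε' < 1) :
    (badCount ε' S : ℝ) ≤ 3 * (S.length : ℝ) * ε / ε' :=
  bad_index_count_bound_general ε ε' S h h1
end
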